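/- Let q, d be with gcd(d, q−1) = 1 and d ≥ 2, and let N_d = (1/d)·∑_{b|d} μ(d/b)·q^b be the number of monic irreducible polynomials of degree d over 𝔽_q. Then q − 1 divides N_d. -/
import Mathlib


/-- If `gcd(d, q - 1) = 1` and `d ≥ 2`, then `q - 1` divides the number
`N_d = (1/d) ∑_{b ∣ d} μ(d/b) q^b` of monic irreducible polynomials of degree
`d` over `𝔽_q`. -/
theorem stmt_13 (q d : ℕ) (hq : IsPrimePow q) (hd : 2 ≤ d)
    (hgcd : Nat.gcd d (q - 1) = 1) (N : ℤ)
    (hN : (d : ℤ) * N = ∑ b ∈ d.divisors, (ArithmeticFunction.moebius (d / b)) * (q : ℤ) ^ b) :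
    ((q : ℤ) - 1) ∣ N := by
  have hsum : (∑ b ∈ d.divisors, (ArithmeticFunction.moebius (d / b) : ℤ)) = 0 := by
    rw [Nat.sum_div_divisors d (fun b => (ArithmeticFunction.moebius b : ℤ))]
    have := ArithmeticFunction.moebius_mul_coe_zeta
    have h := congrArg (fun f => f d) this
    simp only [ArithmeticFunction.coe_mul_zeta_apply, ArithmeticFunction.one_apply] at h
    rw [h]
    omega
  have hdvd : ((q : ℤ) - 1) ∣ (d : ℤ) * N := by
    rw [hN]
    calc ((q : ℤ) - 1) ∣ ∑ b ∈ d.divisors, (ArithmeticFunction.moebius (d / b)) * ((q : ℤ) ^ b - 1) := by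
          apply Finset.dvd_sum
          intro b hb
          exact Dvd.dvd.mul_left (by simpa using sub_dvd_pow_sub_pow (q : ℤ) 1 b) _
      _ = ∑ b ∈ d.divisors, (ArithmeticFunction.moebius (d / b)) * (q : ℤ) ^ b := by
          simp only [mul_sub, mul_one, Finset.sum_sub_distrib, hsum, sub_zero]
  have hq1 : 1 ≤ q := hq.pos
  have hcop : IsCoprime ((q : ℤ) - 1) (d : ℤ) := by
    have : ((q : ℤ) - 1) = ((q - 1 : ℕ) : ℤ) := by push_cast [hq1]; ring
    rw [this]
    rw [Int.isCoprime_iff_gcd_eq_one, Int.gcd_natCast_natCast, Nat.gcd_comm]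
    exact hgcd
  exact hcop.dvd_of_dvd_mul_left hdvd
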